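/- arXiv:1104.4370 — 3 statements merged into one kernel-verified Lean document; each statement's English description precedes it below -/
import Mathlib

section
/- Let G_i and G_j be two graphs on a common vertex set containing s and t, with (s,t) an edge of neither, such that no s–t cut vertex of G_j lies in G_i and no s–t cut vertex of G_i lies in G_j, the sets of s–t cut vertices X_i and X_j are disjoint, X_i and X_j are both nonempty, d_i(s,t) ≤ 4 and d_j(s,t) ≤ 4. If d_i(s,t) = 2, then there exist an s–t path in G_i and an s–t path in G_j (each of length ≤ 4) that are internally disjoint. -/
open SimpleGraph

/-- The internal vertices of a walk from `s` to `t`. -/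
def SimpleGraph.Walk.internals {V : Type*} {G : SimpleGraph V} {s t : V}
    (p : G.Walk s t) : Set V :=
  {v | v ∈ p.support ∧ v ≠ s ∧ v ≠ t}

/-- The set of `s`–`t` cut vertices of `G`: vertices other than `s,t` whose removal
disconnects `s` from `t`, equivalently (for reachable `s,t`) vertices lying on every
`s`–`t` walk. -/
def cutSet {V : Type*} (G : SimpleGraph V) (s t : V) : Set V :=
  {v | v ≠ s ∧ v ≠ t ∧ ∀ p : G.Walk s t, v ∈ p.support}

/-
A shortest `s`–`t` path of `G_i` has a single internal vertex, and every `s`–`t` cut vertex of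
`G_i` is internal to it; so that vertex is a cut vertex of `G_i`, hence isolated in `G_j`, and it
cannot be internal to any `s`–`t` walk of `G_j`.
-/

namespace SimpleGraph.Walk

variable {V : Type*} {G : SimpleGraph V} {s t v : V}

lemma not_isIsolated_of_mem_internals (p : G.Walk s t) (hv : v ∈ p.internals) :
    ¬ G.IsIsolated v := by
  obtain ⟨hvp, hvs, -⟩ := hv
  have hp : ¬ p.Nil := fun hnil => hvs (by simpa [nil_iff_support_eq.mp hnil] using hvp)
  obtain ⟨u, -, hvu⟩ := adj_of_mem_walk_support p hp hvp
  exact hvu.not_isIsolated_left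

lemma internals_subset_getVert_one_of_length_eq_two (p : G.Walk s t) (hp : p.length = 2) :
    p.internals ⊆ {p.getVert 1} := by
  rintro v ⟨hvp, hvs, hvt⟩
  match p, hp with
  | cons _ (cons _ nil), _ => simp_all

end SimpleGraph.Walk

section

variable {V : Type*} {G : SimpleGraph V} {s t : V}

lemma cutSet_subset_internals (p : G.Walk s t) : cutSet G s t ⊆ p.internals :=
  fun _ ⟨hvs, hvt, hv⟩ => ⟨hv p, hvs, hvt⟩

lemma internals_subset_cutSet_of_length_eq_two (p : G.Walk s t) (hp : p.length = 2)
    (hcut : (cutSet G s t).Nonempty) : p.internals ⊆ cutSet G s t := by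
  obtain ⟨x, hx⟩ := hcut
  have hmid := p.internals_subset_getVert_one_of_length_eq_two hp
  have hxmid : x = p.getVert 1 := hmid (cutSet_subset_internals p hx)
  intro v hv
  rwa [hmid hv, ← hxmid]

end

theorem stmt10_general {V : Type*} (Gi Gj : SimpleGraph V) (s t : V)
    (hri : Gi.Reachable s t) (hrj : Gj.Reachable s t)
    (habsi : ∀ v ∈ cutSet Gi s t, ∀ u, ¬ Gj.Adj v u)
    (hnei : (cutSet Gi s t).Nonempty)
    (hdj : Gj.dist s t ≤ 4)
    (hdi2 : Gi.dist s t = 2) :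
    ∃ (Pi : Gi.Walk s t) (Pj : Gj.Walk s t), Pi.IsPath ∧ Pj.IsPath ∧
      Pi.length ≤ 4 ∧ Pj.length ≤ 4 ∧ Disjoint Pi.internals Pj.internals := by
  obtain ⟨Pi, hPi, hPi_len⟩ := hri.exists_path_of_dist
  obtain ⟨Pj, hPj, hPj_len⟩ := hrj.exists_path_of_dist
  refine ⟨Pi, Pj, hPi, hPj, by omega, by omega, Set.disjoint_left.mpr fun v hvi hvj => ?_⟩
  have hv_cut := internals_subset_cutSet_of_length_eq_two Pi (by omega) hnei hvi
  exact Pj.not_isIsolated_of_mem_internals hvj (habsi v hv_cut)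

/-- in the setting of procedure `Test` — `(s,t)` an edge of neither graph,
the (nonempty, disjoint) cut sets `X_i`, `X_j` mutually deleted (i.e. isolated in the other
graph), both distances at most 4 — if `d_i(s,t) = 2` then there are internally disjoint
`s`–`t` paths of length at most 4, one in `G_i` and one in `G_j`. -/
theorem stmt10 {V : Type*} (Gi Gj : SimpleGraph V) (s t : V) (hne : s ≠ t)
    (hadji : ¬ Gi.Adj s t) (hadjj : ¬ Gj.Adj s t)
    (hri : Gi.Reachable s t) (hrj : Gj.Reachable s t)
    (habsj : ∀ v ∈ cutSet Gj s t, ∀ u, ¬ Gi.Adj v u)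
    (habsi : ∀ v ∈ cutSet Gi s t, ∀ u, ¬ Gj.Adj v u)
    (hdisj : cutSet Gi s t ∩ cutSet Gj s t = ∅)
    (hnei : (cutSet Gi s t).Nonempty) (hnej : (cutSet Gj s t).Nonempty)
    (hdi : Gi.dist s t ≤ 4) (hdj : Gj.dist s t ≤ 4)
    (hdi2 : Gi.dist s t = 2) :
    ∃ (Pi : Gi.Walk s t) (Pj : Gj.Walk s t), Pi.IsPath ∧ Pj.IsPath ∧
      Pi.length ≤ 4 ∧ Pj.length ≤ 4 ∧ Disjoint Pi.internals Pj.internals :=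
  stmt10_general Gi Gj s t hri hrj habsi hnei hdj hdi2
end

section
/- In a c-colors graph G with vertices s,t, if (s,t) ∈ E_i for some color i, then there exists a maximum family of internally disjoint uni-color s–t paths containing the single-edge path (s,t) of color i. Hence the maximum colored connectivity of G equals 1 plus the maximum colored connectivity of the graph obtained by deleting the edge (s,t) from E_i. -/
/-!
The single-edge path `e = (s,t)` of color `i` has no internal vertex, so it can be added to any
family of internally disjoint paths not containing it; hence every maximum family contains it.
A path of color `i` that uses the edge `st` is `e` itself, so removing `e` from a maximum family
leaves a family of the graph with `st` deleted from `E_i`; conversely, adding `e` to a maximum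
family of that graph gives a family of `G`. Maxima exist because a finite graph has finitely many
paths.
-/

open SimpleGraph

/-- A family of internally disjoint uni-color `s`–`t` paths. -/
def IsUniFamily {V : Type*} {c : ℕ} (G : Fin c → SimpleGraph V) (s t : V)
    (F : Finset (Σ i : Fin c, (G i).Walk s t)) : Prop :=
  (∀ p ∈ F, p.2.IsPath) ∧
  ∀ p ∈ F, ∀ q ∈ F, p ≠ q → Disjoint p.2.internals q.2.internals

/-- The colored connectivity `κ(s,t)`. -/
noncomputable def kappa {V : Type*} {c : ℕ} (G : Fin c → SimpleGraph V) (s t : V) : ℕ :=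
  sSup {n | ∃ F : Finset (Σ i : Fin c, (G i).Walk s t), IsUniFamily G s t F ∧ F.card = n}

/-- A family of internally disjoint `s`–`t` paths in a single graph. -/
def IsPathFamily {V : Type*} (G : SimpleGraph V) (s t : V) (F : Finset (G.Walk s t)) : Prop :=
  (∀ p ∈ F, p.IsPath) ∧
  ∀ p ∈ F, ∀ q ∈ F, p ≠ q → Disjoint p.internals q.internals

/-- `κ_i(s,t)` in a single graph. -/
noncomputable def kappaI {V : Type*} (G : SimpleGraph V) (s t : V) : ℕ :=
  sSup {n | ∃ F : Finset (G.Walk s t), IsPathFamily G s t F ∧ F.card = n}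

namespace SimpleGraph.Walk

variable {V : Type*} {G H : SimpleGraph V} {s t : V}

lemma internals_transfer (p : G.Walk s t) (hp : ∀ e ∈ p.edges, e ∈ H.edgeSet) :
    (p.transfer H hp).internals = p.internals := by
  simp only [internals, support_transfer]

lemma eq_of_transfer_eq {p q : G.Walk s t} (hp : ∀ e ∈ p.edges, e ∈ H.edgeSet)
    (hq : ∀ e ∈ q.edges, e ∈ H.edgeSet) (h : p.transfer H hp = q.transfer H hq) : p = q :=
  ext_support <| by simpa only [support_transfer] using congrArg support h

lemma internals_cons_nil (h : G.Adj s t) : (cons h nil).internals = ∅ := by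
  ext v
  simp only [internals, support_cons, support_nil, List.mem_cons, List.not_mem_nil,
    or_false, Set.mem_ofPred_eq, Set.mem_empty_iff_false, iff_false]
  rintro ⟨rfl | rfl, hs, ht⟩ <;> contradiction

lemma IsPath.eq_cons_nil_of_mem_edges (hst : s ≠ t) {p : G.Walk s t} (hp : p.IsPath)
    (he : s(s, t) ∈ p.edges) : ∃ h : G.Adj s t, p = cons h Walk.nil := by
  cases p with
  | nil => exact (hst rfl).elim
  | @cons _ w _ a q =>
    rw [cons_isPath_iff] at hp
    rcases List.mem_cons.mp (edges_cons a q ▸ he) with he | he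
    · obtain rfl : w = t := by
        rcases Sym2.eq_iff.mp he with ⟨-, hw⟩ | ⟨-, hts⟩
        · exact hw.symm
        · exact absurd hts.symm hst
      exact ⟨a, by rw [eq_nil_iff_nil.mpr (isPath_iff_nil.mp hp.1)]⟩
    · exact absurd (q.fst_mem_support_of_mem_edges he) hp.2

end SimpleGraph.Walk

lemma mem_edgeSet_update_deleteEdges {V : Type*} {c : ℕ} (G : Fin c → SimpleGraph V)
    (i j : Fin c) (S : Set (Sym2 V)) (e : Sym2 V) :
    e ∈ (Function.update G i ((G i).deleteEdges S) j).edgeSet ↔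
      e ∈ (G j).edgeSet ∧ (j = i → e ∉ S) := by
  by_cases hj : j = i
  · subst hj
    simp only [Function.update_self, edgeSet_deleteEdges, Set.mem_sdiff, forall_const]
  · simp only [Function.update_of_ne hj, hj, false_imp_iff, and_true]

lemma isUniFamily_empty {V : Type*} {c : ℕ} (G : Fin c → SimpleGraph V) (s t : V) :
    IsUniFamily G s t ∅ :=
  ⟨fun _ hp => absurd hp (Finset.notMem_empty _), fun _ hp => absurd hp (Finset.notMem_empty _)⟩

namespace IsUniFamily

variable {V : Type*} {c : ℕ} {G H : Fin c → SimpleGraph V} {s t : V}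
  {F : Finset (Σ i : Fin c, (G i).Walk s t)}

lemma subset (hF : IsUniFamily G s t F) {F' : Finset (Σ i : Fin c, (G i).Walk s t)}
    (hsub : F' ⊆ F) : IsUniFamily G s t F' :=
  ⟨fun p hp => hF.1 p (hsub hp), fun p hp q hq => hF.2 p (hsub hp) q (hsub hq)⟩

lemma insert_cons_nil [DecidableEq (Σ i : Fin c, (G i).Walk s t)] (hF : IsUniFamily G s t F)
    {i : Fin c} (h : (G i).Adj s t) : IsUniFamily G s t (insert ⟨i, .cons h .nil⟩ F) := by
  have hempty := Walk.internals_cons_nil h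
  refine ⟨fun p hp => ?_, fun p hp q hq hpq => ?_⟩
  · rcases Finset.mem_insert.mp hp with rfl | hp
    exacts [Walk.IsPath.of_adj h, hF.1 p hp]
  · rcases Finset.mem_insert.mp hp with rfl | hp <;>
      rcases Finset.mem_insert.mp hq with rfl | hq
    · exact absurd rfl hpq
    · exact hempty ▸ Set.empty_disjoint _
    · exact hempty ▸ Set.disjoint_empty _
    · exact hF.2 p hp q hq hpq

lemma exists_transfer (hF : IsUniFamily G s t F)
    (hE : ∀ p ∈ F, ∀ e ∈ p.2.edges, e ∈ (H p.1).edgeSet) :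
    ∃ F' : Finset (Σ i : Fin c, (H i).Walk s t), IsUniFamily H s t F' ∧ F'.card = F.card ∧
      ∀ p' ∈ F', ∃ p ∈ F, p'.1 = p.1 ∧ p'.2.edges = p.2.edges := by
  classical
  let φ : {p // p ∈ F} → Σ i : Fin c, (H i).Walk s t :=
    fun p => ⟨p.1.1, p.1.2.transfer (H p.1.1) (hE p.1 p.2)⟩
  have hφ : Set.InjOn φ F.attach := by
    rintro ⟨⟨i, p⟩, hp⟩ - ⟨⟨j, q⟩, hq⟩ - hpq
    obtain ⟨rfl, hpq⟩ := Sigma.mk.inj_iff.mp hpq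
    obtain rfl := Walk.eq_of_transfer_eq _ _ (eq_of_heq hpq)
    rfl
  refine ⟨F.attach.image φ, ⟨?_, ?_⟩, ?_, ?_⟩
  · simp only [Finset.mem_image]
    rintro _ ⟨p, -, rfl⟩
    exact (hF.1 p.1 p.2).transfer _
  · simp only [Finset.mem_image]
    rintro _ ⟨p, -, rfl⟩ _ ⟨q, -, rfl⟩ hpq
    have hne : p.1 ≠ q.1 := fun h => hpq (congrArg φ (Subtype.ext h))
    simpa only [φ, Walk.internals_transfer] using hF.2 p.1 p.2 q.1 q.2 hne
  · rw [Finset.card_image_of_injOn hφ, Finset.card_attach]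
  · simp only [Finset.mem_image]
    rintro _ ⟨p, -, rfl⟩
    exact ⟨p.1, p.2, rfl, Walk.edges_transfer _ _⟩

lemma card_le_ncard_paths [Finite V] (hF : IsUniFamily G s t F) :
    F.card ≤ {p : Σ i : Fin c, (G i).Walk s t | p.2.IsPath}.ncard := by
  classical
  have hfin : {p : Σ i : Fin c, (G i).Walk s t | p.2.IsPath}.Finite := by
    have := Fintype.ofFinite V
    convert Set.finite_range
      (fun q : Σ i : Fin c, (G i).Path s t => (⟨q.1, q.2.1⟩ : Σ i : Fin c, (G i).Walk s t))
    ext ⟨i, p⟩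
    refine ⟨fun hp => ⟨⟨i, p, hp⟩, rfl⟩, ?_⟩
    rintro ⟨⟨j, q, hq⟩, hjq⟩
    cases hjq
    exact hq
  rw [← Set.ncard_coe_finset]
  exact Set.ncard_le_ncard (fun p hp => hF.1 p hp) hfin

end IsUniFamily

section Kappa

variable {V : Type*} [Finite V] {c : ℕ} (G : Fin c → SimpleGraph V) (s t : V)

lemma bddAbove_card_isUniFamily :
    BddAbove
      {n | ∃ F : Finset (Σ i : Fin c, (G i).Walk s t), IsUniFamily G s t F ∧ F.card = n} :=
  ⟨_, by rintro _ ⟨F, hF, rfl⟩; exact hF.card_le_ncard_paths⟩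

lemma exists_isUniFamily_card_eq_kappa :
    ∃ F : Finset (Σ i : Fin c, (G i).Walk s t), IsUniFamily G s t F ∧ F.card = kappa G s t :=
  Nat.sSup_mem (by exact ⟨0, ∅, isUniFamily_empty G s t, rfl⟩)
    (bddAbove_card_isUniFamily G s t)

variable {G s t}

lemma IsUniFamily.card_le_kappa {F : Finset (Σ i : Fin c, (G i).Walk s t)}
    (hF : IsUniFamily G s t F) : F.card ≤ kappa G s t :=
  le_csSup (bddAbove_card_isUniFamily G s t) ⟨F, hF, rfl⟩

lemma IsUniFamily.mem_of_card_eq_kappa {F : Finset (Σ i : Fin c, (G i).Walk s t)}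
    (hF : IsUniFamily G s t F) (hcard : F.card = kappa G s t) {i : Fin c} (h : (G i).Adj s t) :
    (⟨i, .cons h .nil⟩ : Σ j : Fin c, (G j).Walk s t) ∈ F := by
  classical
  by_contra hnot
  have := (hF.insert_cons_nil h).card_le_kappa
  rw [Finset.card_insert_of_notMem hnot] at this
  omega

lemma kappa_le_one_add_kappa_deleteEdges {i : Fin c} (h : (G i).Adj s t) :
    kappa G s t ≤ 1 + kappa (Function.update G i ((G i).deleteEdges {s(s, t)})) s t := by
  classical
  obtain ⟨F, hF, hcard⟩ := exists_isUniFamily_card_eq_kappa G s t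
  have hmem := hF.mem_of_card_eq_kappa hcard h
  have hE : ∀ p ∈ F.erase ⟨i, .cons h .nil⟩, ∀ e ∈ p.2.edges,
      e ∈ (Function.update G i ((G i).deleteEdges {s(s, t)}) p.1).edgeSet := by
    rintro ⟨j, p⟩ hp e he
    obtain ⟨hne, hpF⟩ := Finset.mem_erase.mp hp
    refine (mem_edgeSet_update_deleteEdges G i j _ e).mpr ⟨p.edges_subset_edgeSet he, ?_⟩
    rintro rfl rfl
    obtain ⟨a, hpa⟩ := (hF.1 _ hpF).eq_cons_nil_of_mem_edges h.ne he
    exact hne (Sigma.ext rfl (heq_of_eq hpa))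
  obtain ⟨D, hD, hDcard, -⟩ := (hF.subset (F.erase_subset _)).exists_transfer hE
  have := hD.card_le_kappa
  rw [hDcard, Finset.card_erase_of_mem hmem] at this
  omega

lemma one_add_kappa_deleteEdges_le_kappa {i : Fin c} (h : (G i).Adj s t) :
    1 + kappa (Function.update G i ((G i).deleteEdges {s(s, t)})) s t ≤ kappa G s t := by
  classical
  obtain ⟨F, hF, hcard⟩ := exists_isUniFamily_card_eq_kappa
    (Function.update G i ((G i).deleteEdges {s(s, t)})) s t
  obtain ⟨D, hD, hDcard, hDedges⟩ := hF.exists_transfer (H := G) fun p _ e he =>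
    ((mem_edgeSet_update_deleteEdges G i p.1 _ e).mp (p.2.edges_subset_edgeSet he)).1
  have hnot : (⟨i, .cons h .nil⟩ : Σ j : Fin c, (G j).Walk s t) ∉ D := by
    intro hmem
    obtain ⟨p, -, hi, hedges⟩ := hDedges _ hmem
    have hst : s(s, t) ∈ p.2.edges := by simp [← hedges]
    exact ((mem_edgeSet_update_deleteEdges G i p.1 _ _).mp
      (p.2.edges_subset_edgeSet hst)).2 hi.symm rfl
  have := (hD.insert_cons_nil h).card_le_kappa
  rw [Finset.card_insert_of_notMem hnot, hDcard, hcard] at this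
  omega

end Kappa

/-- if `(s,t) ∈ E_i`, then some maximum family of internally disjoint
uni-color `s`–`t` paths contains the single-edge path `(s,t)` of color `i`, and the colored
connectivity equals `1` plus the colored connectivity after deleting the edge `(s,t)` from
`E_i`. -/
theorem stmt12 {V : Type*} [Fintype V] {c : ℕ} (G : Fin c → SimpleGraph V) (s t : V)
    (i : Fin c) (h : (G i).Adj s t) :
    (∃ F : Finset (Σ j : Fin c, (G j).Walk s t),
      IsUniFamily G s t F ∧ F.card = kappa G s t ∧
      (⟨i, SimpleGraph.Walk.cons h SimpleGraph.Walk.nil⟩ :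
        Σ j : Fin c, (G j).Walk s t) ∈ F) ∧
    kappa G s t =
      1 + kappa (Function.update G i ((G i).deleteEdges {s(s, t)})) s t := by
  obtain ⟨F, hF, hcard⟩ := exists_isUniFamily_card_eq_kappa G s t
  exact ⟨⟨F, hF, hcard, hF.mem_of_card_eq_kappa hcard h⟩,
    (kappa_le_one_add_kappa_deleteEdges h).antisymm (one_add_kappa_deleteEdges_le_kappa h)⟩
end

section
/- Let U be a finite set and T a finite collection of subsets of U, each of size at most k. Let S ⊆ T be a pairwise-disjoint subcollection that is 1-locally optimal: there do not exist two sets A,B ∈ T \ S such that A and B are disjoint from each other and A ∪ B intersects at most one member of S (i.e., no swap of one set in S for two disjoint sets, and no addition of a single disjoint set, is possible). Then for any pairwise-disjoint subcollection OPT ⊆ T, |OPT| ≤ 2|S| when k = 3. -/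
/-- the Hurkens–Schrijver local-search bound for maximum set packing with
sets of size at most `k = 3` and swap parameter `s = 1`. If `S ⊆ T` is pairwise disjoint
and 1-locally optimal — no single set of `T \ S` disjoint from all of `S` can be added
(`hadd`), and no two disjoint sets `A, B ∈ T \ S` meet at most one member of `S` (`hswap`) —
then every pairwise disjoint subcollection `OPT ⊆ T` satisfies `|OPT| ≤ 2|S|`. -/
theorem stmt14 {α : Type*} [DecidableEq α] (T : Finset (Finset α))
    (hk : ∀ A ∈ T, A.card ≤ 3)
    (S : Finset (Finset α)) (hST : S ⊆ T)
    (hSdisj : ∀ A ∈ S, ∀ B ∈ S, A ≠ B → Disjoint A B)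
    (hadd : ¬ ∃ A ∈ T, A ∉ S ∧ ∀ C ∈ S, Disjoint A C)
    (hswap : ¬ ∃ A ∈ T, ∃ B ∈ T, A ∉ S ∧ B ∉ S ∧ A ≠ B ∧ Disjoint A B ∧
      ({C ∈ (S : Set (Finset α)) | ¬ Disjoint C A ∨ ¬ Disjoint C B}).ncard ≤ 1)
    (OPT : Finset (Finset α)) (hOT : OPT ⊆ T)
    (hOdisj : ∀ A ∈ OPT, ∀ B ∈ OPT, A ≠ B → Disjoint A B) :
    OPT.card ≤ 2 * S.card := by
  classical
  push_neg at hadd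
  set O' := OPT \ S with hO'def
  set S' := S \ OPT with hS'def
  set N : Finset α → Finset (Finset α) := fun A => S'.filter (fun C => ¬ Disjoint C A)
    with hNdef
  have hO'sub : ∀ {A}, A ∈ O' → A ∈ OPT ∧ A ∉ S := fun h => Finset.mem_sdiff.1 h
  have hmeetS' : ∀ A ∈ O', ∀ C ∈ S, ¬ Disjoint C A → C ∈ S' := by
    intro A hA C hCS hm
    obtain ⟨hAO, hAS⟩ := hO'sub hA
    refine Finset.mem_sdiff.2 ⟨hCS, fun hCO => hm ?_⟩
    exact hOdisj C hCO A hAO (fun h => hAS (h ▸ hCS))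
  have hNne : ∀ A ∈ O', (N A).Nonempty := by
    intro A hA
    obtain ⟨hAO, hAS⟩ := hO'sub hA
    obtain ⟨C, hCS, hCA⟩ := hadd A (hOT hAO) hAS
    have hm : ¬ Disjoint C A := fun h => hCA h.symm
    exact ⟨C, Finset.mem_filter.2 ⟨hmeetS' A hA C hCS hm, hm⟩⟩
  have hsum_swap : ∑ A ∈ O', (N A).card
      = ∑ C ∈ S', (O'.filter (fun A => ¬ Disjoint C A)).card := by
    simp only [hNdef, Finset.card_filter]
    exact Finset.sum_comm
  have hC3 : ∀ C ∈ S', (O'.filter (fun A => ¬ Disjoint C A)).card ≤ 3 := by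
    intro C hC
    have hCcard : C.card ≤ 3 := hk C (hST (Finset.mem_sdiff.1 hC).1)
    rcases (O'.filter (fun A => ¬ Disjoint C A)).eq_empty_or_nonempty with he | ⟨A0, hA0⟩
    · simp [he]
    · have hx0 : (C ∩ A0).Nonempty := by
        rw [Finset.mem_filter] at hA0
        exact Finset.not_disjoint_iff_nonempty_inter.1 hA0.2
      refine le_trans (Finset.card_le_card_of_injOn
        (fun A => if h : (C ∩ A).Nonempty then h.choose else hx0.choose) ?_ ?_) hCcard
      · intro A hA
        rw [Finset.mem_coe, Finset.mem_filter] at hA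
        have h : (C ∩ A).Nonempty := Finset.not_disjoint_iff_nonempty_inter.1 hA.2
        simp only [dif_pos h]
        exact (Finset.mem_inter.1 h.choose_spec).1
      · intro A hA B hB hfe
        rw [Finset.mem_coe, Finset.mem_filter] at hA hB
        have hA' : (C ∩ A).Nonempty := Finset.not_disjoint_iff_nonempty_inter.1 hA.2
        have hB' : (C ∩ B).Nonempty := Finset.not_disjoint_iff_nonempty_inter.1 hB.2
        simp only [dif_pos hA', dif_pos hB'] at hfe
        by_contra hne
        have hd := hOdisj A (hO'sub hA.1).1 B (hO'sub hB.1).1 hne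
        have hxA : hA'.choose ∈ A := (Finset.mem_inter.1 hA'.choose_spec).2
        have hxB : hB'.choose ∈ B := (Finset.mem_inter.1 hB'.choose_spec).2
        rw [hfe] at hxA
        exact (Finset.disjoint_left.1 hd hxA) hxB
  set O1 := O'.filter (fun A => (N A).card = 1) with hO1def
  have hO1le : O1.card ≤ S'.card := by
    refine Finset.card_le_card_of_injOn
      (fun A => if h : (N A).Nonempty then h.choose else ∅) ?_ ?_
    · intro A hA
      have hA' : A ∈ O' := (Finset.mem_filter.1 hA).1
      have h := hNne A hA'
      simp only [dif_pos h]
      exact (Finset.mem_filter.1 h.choose_spec).1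
    · intro A hA B hB hfe
      rw [Finset.mem_coe, hO1def, Finset.mem_filter] at hA hB
      have hAO' := hA.1
      have hBO' := hB.1
      have hAne := hNne A hAO'
      have hBne := hNne B hBO'
      simp only [dif_pos hAne, dif_pos hBne] at hfe
      by_contra hne
      have hdAB : Disjoint A B := hOdisj A (hO'sub hAO').1 B (hO'sub hBO').1 hne
      exfalso
      apply hswap
      refine ⟨A, hOT (hO'sub hAO').1, B, hOT (hO'sub hBO').1, (hO'sub hAO').2,
        (hO'sub hBO').2, hne, hdAB, ?_⟩
      have hcoe : ({C ∈ (S : Set (Finset α)) | ¬ Disjoint C A ∨ ¬ Disjoint C B}).ncard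
          = (S.filter (fun C => ¬ Disjoint C A ∨ ¬ Disjoint C B)).card := by
        rw [← Set.ncard_coe_finset]
        congr 1
        ext C
        simp
      rw [hcoe]
      have hwA : hAne.choose ∈ N A := hAne.choose_spec
      have hwB : hAne.choose ∈ N B := by rw [hfe]; exact hBne.choose_spec
      have hsub : S.filter (fun C => ¬ Disjoint C A ∨ ¬ Disjoint C B) ⊆ {hAne.choose} := by
        intro C hC
        rw [Finset.mem_filter] at hC
        rcases hC.2 with h | h
        · exact Finset.mem_singleton.2 (Finset.card_le_one.1 (le_of_eq hA.2) C
            (Finset.mem_filter.2 ⟨hmeetS' A hAO' C hC.1 h, h⟩) _ hwA)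
        · exact Finset.mem_singleton.2 (Finset.card_le_one.1 (le_of_eq hB.2) C
            (Finset.mem_filter.2 ⟨hmeetS' B hBO' C hC.1 h, h⟩) _ hwB)
      exact le_trans (Finset.card_le_card hsub) (by simp)
  have hlow : 2 * O'.card ≤ (∑ A ∈ O', (N A).card) + O1.card := by
    have h1 : O1.card = ∑ A ∈ O', (if (N A).card = 1 then 1 else 0) :=
      Finset.card_filter _ _
    rw [h1, ← Finset.sum_add_distrib]
    calc 2 * O'.card = ∑ _A ∈ O', 2 := by rw [Finset.sum_const, smul_eq_mul, mul_comm]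
      _ ≤ _ := Finset.sum_le_sum (by
        intro A hA
        have := Finset.card_pos.2 (hNne A hA)
        split_ifs with h <;> omega)
  have hup : (∑ A ∈ O', (N A).card) ≤ 3 * S'.card := by
    rw [hsum_swap]
    calc _ ≤ ∑ _C ∈ S', 3 := Finset.sum_le_sum hC3
      _ = 3 * S'.card := by rw [Finset.sum_const, smul_eq_mul, mul_comm]
  have h1 : O'.card + (OPT ∩ S).card = OPT.card := Finset.card_sdiff_add_card_inter _ _
  have h2 : S'.card + (S ∩ OPT).card = S.card := Finset.card_sdiff_add_card_inter _ _
  have h3 : (OPT ∩ S).card = (S ∩ OPT).card := by rw [Finset.inter_comm]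
  omega
end
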